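/- arXiv:1612.01170 — 2 statements merged into one kernel-verified Lean document; each statement's English description precedes it below -/
import Mathlib

section
/- Let A be a separable UHF algebra and let φ_j, j ∈ ℕ, be a sequence of separated product states of A. Then the states φ_j are pairwise unitarily nonequivalent; indeed, for all j ≠ l and every n ∈ ℕ there exists a projection p in the relative commutant A_n′ ∩ A with φ_j(p) = 0 and φ_l(p) = 1. -/
noncomputable section

/-- A state: a norm-one positive continuous linear functional. -/
def IsState {B : Type} [NormedRing B] [StarRing B] [NormedAlgebra ℂ B]
    (φ : B →L[ℂ] ℂ) : Prop :=
  ‖φ‖ = 1 ∧ ∀ a : B, 0 ≤ (φ (star a * a)).re ∧ (φ (star a * a)).im = 0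

/-- A pure state: an extreme point of the state space. -/
def IsPureState {B : Type} [NormedRing B] [StarRing B] [NormedAlgebra ℂ B]
    (φ : B →L[ℂ] ℂ) : Prop :=
  φ ∈ Set.extremePoints ℝ {ψ : B →L[ℂ] ℂ | IsState ψ}

/-- Unitary equivalence of states: `ψ = φ ∘ Ad u` for a unitary `u`. -/
def StateUnitarilyEquiv {B : Type} [CStarAlgebra B] (φ ψ : B →L[ℂ] ℂ) : Prop :=
  ∃ u ∈ unitary B, ∀ a : B, ψ a = φ (u * a * star u)

/-- The product projection `q_m · p_{m+1,m} ⋯ p_{m+l,m}`. -/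
def sepProdElem {A : Type} [CStarAlgebra A] (q : ℕ → A) (p : ℕ → ℕ → A) (m : ℕ) :
    ℕ → A
  | 0 => q m
  | l + 1 => sepProdElem q p m l * p (m + l + 1) m

/-!
If `φ_m(e) = 1` for the projection `e = q_m p_{m+1,m} ⋯ p_{N,m}`, then positivity and
`‖φ_m‖ = 1` force `φ_m(p_{N,m}) = 1` (as `e ≤ p_{N,m}`) and `φ_m(p_{N,j}) = 0` for `j ≠ m`
(as `e ⊥ p_{N,j}`). So `p_{N,l}`, which commutes with `A_n` for `n ≤ N`, separates `φ_j`
from `φ_l`. If `φ_l = φ_j ∘ Ad u`, approximate `u` within `1/4` by some `a ∈ A_n`; then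
`‖u p u* - p‖ = ‖[u - a, p]‖ < 1/2` for the separating `p ∈ A_n' ∩ A`, contradicting
`φ_l(p) - φ_j(p) = 1`.
-/

theorem norm_mul_sub_mul_le_of_commute {R : Type*} [NormedRing R] {e a : R} (u : R)
    (hea : Commute e a) (he : ‖e‖ ≤ 1) : ‖u * e - e * u‖ ≤ 2 * ‖u - a‖ := by
  have hsplit : u * e - e * u = (u - a) * e - e * (u - a) := by
    rw [sub_mul, mul_sub, hea.eq]; abel
  calc ‖u * e - e * u‖ ≤ ‖u - a‖ * ‖e‖ + ‖e‖ * ‖u - a‖ := by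
        rw [hsplit]
        exact (norm_sub_le _ _).trans (add_le_add (norm_mul_le _ _) (norm_mul_le _ _))
    _ ≤ 2 * ‖u - a‖ := by nlinarith [norm_nonneg (u - a)]

section States

variable {B : Type} [CStarAlgebra B] {φ : B →L[ℂ] ℂ}

theorem IsState.apply_eq_zero_of_mul_eq_zero (hφ : IsState φ) {e f : B}
    (he : IsStarProjection e) (hf : IsStarProjection f) (hef : e * f = 0) (hφe : φ e = 1) :
    φ f = 0 := by
  have hf_pos := hφ.2 f
  rw [hf.isSelfAdjoint.star_eq, hf.isIdempotentElem.eq] at hf_pos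
  have hsum : (1 + φ f).re ≤ 1 :=
    calc (1 + φ f).re ≤ ‖φ (e + f)‖ := by rw [map_add, hφe]; exact Complex.re_le_norm _
      _ ≤ ‖φ‖ * ‖e + f‖ := φ.le_opNorm _
      _ ≤ 1 := by rw [hφ.1, one_mul]; exact (he.add hf hef).norm_le
  rw [Complex.add_re, Complex.one_re] at hsum
  exact Complex.ext (by simp only [Complex.zero_re]; linarith [hf_pos.1]) hf_pos.2

theorem IsState.apply_eq_one_of_mul_eq_left (hφ : IsState φ) {e f : B}
    (he : IsStarProjection e) (hf : IsStarProjection f) (hef : e * f = e) (hφe : φ e = 1) :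
    φ f = 1 := by
  have h := hφ.apply_eq_zero_of_mul_eq_zero he (he.sub_of_mul_eq_left hf hef)
    (by rw [mul_sub, hef, he.isIdempotentElem.eq, sub_self]) hφe
  rwa [map_sub, hφe, sub_eq_zero] at h

theorem not_stateUnitarilyEquiv_of_dense {ψ : B →L[ℂ] ℂ} (hφ : ‖φ‖ ≤ 1) {S : Set B}
    (hS : Dense S)
    (hsep : ∀ a ∈ S, ∃ e, Commute e a ∧ IsStarProjection e ∧ φ e = 0 ∧ ψ e = 1) :
    ¬ StateUnitarilyEquiv φ ψ := by
  rintro ⟨u, hu, hψ⟩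
  obtain ⟨a, ha, hua⟩ := hS.exists_dist_lt u (by norm_num : (0 : ℝ) < 1 / 4)
  obtain ⟨e, hea, he, hφe, hψe⟩ := hsep a ha
  have hconj : u * e * star u - e = (u * e - e * u) * star u := by
    rw [sub_mul, mul_assoc e, Unitary.mul_star_self_of_mem hu, mul_one]
  have hdiff : φ (u * e * star u - e) = 1 := by rw [map_sub, ← hψ, hψe, hφe, sub_zero]
  have : (1 : ℝ) ≤ 2 * ‖u - a‖ :=
    calc (1 : ℝ) = ‖φ (u * e * star u - e)‖ := by rw [hdiff, norm_one]
      _ ≤ ‖φ‖ * ‖u * e * star u - e‖ := φ.le_opNorm _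
      _ ≤ ‖u * e - e * u‖ := by
        rw [hconj, CStarRing.norm_mul_mem_unitary _ (Unitary.star_mem hu)]
        exact mul_le_of_le_one_left (norm_nonneg _) hφ
      _ ≤ 2 * ‖u - a‖ := norm_mul_sub_mul_le_of_commute u hea he.norm_le
  rw [← dist_eq_norm] at this
  linarith

end States

section SeparatedProducts

variable {A : Type} [CStarAlgebra A] {An : ℕ → StarSubalgebra ℂ A} {p : ℕ → ℕ → A}
  {q : ℕ → A}

theorem sepProdElem_mem_and_isStarProjection (hmono : Monotone An)
    (hq : ∀ m, q m ∈ An m ∧ IsStarProjection (q m))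
    (hp : ∀ n, ∀ j < n, p n j ∈ An (n + 1) ∧ (∀ y ∈ An n, Commute (p n j) y) ∧
      IsStarProjection (p n j))
    (m l : ℕ) : sepProdElem q p m l ∈ An (m + l + 1) ∧ IsStarProjection (sepProdElem q p m l) := by
  induction l with
  | zero => exact ⟨hmono (Nat.le_succ m) (hq m).1, (hq m).2⟩
  | succ l ih =>
    obtain ⟨hpmem, hpcomm, hpproj⟩ := hp (m + l + 1) m (by omega)
    exact ⟨mul_mem (hmono (Nat.le_succ _) ih.1) hpmem,
      ih.2.mul hpproj (hpcomm _ ih.1).symm⟩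

theorem IsState.apply_eq_of_sepProdElem_eq_one (hmono : Monotone An)
    (hq : ∀ m, q m ∈ An m ∧ IsStarProjection (q m))
    (hp : ∀ n, ∀ j < n, p n j ∈ An (n + 1) ∧ (∀ y ∈ An n, Commute (p n j) y) ∧
      IsStarProjection (p n j))
    (hporth : ∀ n, ∀ j < n, ∀ j' < n, j ≠ j' → p n j * p n j' = 0)
    {ψ : A →L[ℂ] ℂ} (hψ : IsState ψ) {m N : ℕ} (hmN : m < N)
    (hψone : ψ (sepProdElem q p m (N - m)) = 1) :
    ψ (p N m) = 1 ∧ ∀ j < N, j ≠ m → ψ (p N j) = 0 := by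
  obtain ⟨l, rfl⟩ := Nat.exists_eq_add_of_lt hmN
  have hidx : m + l + 1 - m = l + 1 := by omega
  rw [hidx] at hψone
  have he := (sepProdElem_mem_and_isStarProjection hmono hq hp m (l + 1)).2
  have hpm := (hp (m + l + 1) m hmN).2.2
  refine ⟨hψ.apply_eq_one_of_mul_eq_left he hpm ?_ hψone, fun j hj hjm => ?_⟩
  · change sepProdElem q p m l * p (m + l + 1) m * p (m + l + 1) m = _
    rw [mul_assoc, hpm.isIdempotentElem.eq]; rfl
  · refine hψ.apply_eq_zero_of_mul_eq_zero he (hp _ j hj).2.2 ?_ hψone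
    change sepProdElem q p m l * p (m + l + 1) m * p (m + l + 1) j = 0
    rw [mul_assoc, hporth _ m hmN j hj (Ne.symm hjm), mul_zero]

end SeparatedProducts

theorem separated_product_states_pairwise_inequivalent_general
    (A : Type) [CStarAlgebra A]
    (An : ℕ → StarSubalgebra ℂ A) (p : ℕ → ℕ → A) (q : ℕ → A)
    (φ : ℕ → (A →L[ℂ] ℂ))
    (hmono : Monotone An)
    (hdense : Dense (⋃ n, (An n : Set A)))
    (hp : ∀ n, ∀ j < n, p n j ∈ An (n + 1) ∧ (∀ y ∈ An n, Commute (p n j) y) ∧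
      IsSelfAdjoint (p n j) ∧ p n j * p n j = p n j ∧ p n j ≠ 0)
    (hporth : ∀ n, ∀ j < n, ∀ j' < n, j ≠ j' → p n j * p n j' = 0)
    (hq : ∀ m, q m ∈ An m ∧ IsSelfAdjoint (q m) ∧ q m * q m = q m ∧ q m ≠ 0 ∧
      ∀ z ∈ An m, ∃ c : ℂ, q m * z * q m = c • q m)
    (hφpure : ∀ m, IsPureState (φ m))
    (hφone : ∀ m, ∀ l, 1 ≤ l → φ m (sepProdElem q p m l) = 1) :
    (∀ j l, j ≠ l → ¬ StateUnitarilyEquiv (φ j) (φ l)) ∧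
      ∀ j l, j ≠ l → ∀ n : ℕ, ∃ pr : A, (∀ y ∈ An n, Commute pr y) ∧
        IsSelfAdjoint pr ∧ pr * pr = pr ∧ φ j pr = 0 ∧ φ l pr = 1 := by
  have hstate : ∀ m, IsState (φ m) := fun m => (hφpure m).1
  have hq' : ∀ m, q m ∈ An m ∧ IsStarProjection (q m) := fun m =>
    ⟨(hq m).1, ⟨(hq m).2.2.1, (hq m).2.1⟩⟩
  have hp' : ∀ n, ∀ j < n, p n j ∈ An (n + 1) ∧ (∀ y ∈ An n, Commute (p n j) y) ∧
      IsStarProjection (p n j) := fun n j hj =>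
    ⟨(hp n j hj).1, (hp n j hj).2.1, ⟨(hp n j hj).2.2.2.1, (hp n j hj).2.2.1⟩⟩
  have hvalues : ∀ m N, m < N → φ m (p N m) = 1 ∧ ∀ j < N, j ≠ m → φ m (p N j) = 0 :=
    fun m N hmN => (hstate m).apply_eq_of_sepProdElem_eq_one hmono hq' hp' hporth hmN
      (hφone m _ (by omega))
  have hsep : ∀ j l, j ≠ l → ∀ n : ℕ, ∃ pr : A, (∀ y ∈ An n, Commute pr y) ∧
      IsSelfAdjoint pr ∧ pr * pr = pr ∧ φ j pr = 0 ∧ φ l pr = 1 := by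
    intro j l hjl n
    obtain ⟨-, hcomm, hproj⟩ := hp' (n + j + l + 1) l (by omega)
    exact ⟨p (n + j + l + 1) l, fun y hy => hcomm y (hmono (by omega) hy),
      hproj.isSelfAdjoint, hproj.isIdempotentElem.eq,
      (hvalues j _ (by omega)).2 l (by omega) (Ne.symm hjl), (hvalues l _ (by omega)).1⟩
  refine ⟨fun j l hjl => not_stateUnitarilyEquiv_of_dense (hstate j).1.le hdense ?_, hsep⟩
  intro a ha
  obtain ⟨n, han⟩ := Set.mem_iUnion.mp ha
  obtain ⟨pr, hcomm, hsa, hid, hj, hl⟩ := hsep j l hjl n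
  exact ⟨pr, hcomm a han, ⟨hid, hsa⟩, hj, hl⟩

/-- **Lemma.** Let `A` be a separable UHF algebra and let `φ_j`, `j ∈ ℕ`, be a
sequence of separated product states of `A` (the witnessing data — the chain `Aₙ`
of matrix subalgebras with dense union identifying `A` with `⨂ₙ M_{k(n)}(ℂ)`, the
orthogonal rank-one projections `p_{n,j}` in the `n`-th tensor factor, and the
rank-one projections `q_m ∈ A_m` — are given explicitly as hypotheses).  Then the
states `φ_j` are pairwise unitarily nonequivalent; indeed for all `j ≠ l` and every
`n` there is a projection `p` in the relative commutant `Aₙ' ∩ A` with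
`φ_j(p) = 0` and `φ_l(p) = 1`. -/
theorem separated_product_states_pairwise_inequivalent
    (A : Type) [CStarAlgebra A] [TopologicalSpace.SeparableSpace A]
    (k : ℕ → ℕ) (An : ℕ → StarSubalgebra ℂ A) (p : ℕ → ℕ → A) (q : ℕ → A)
    (φ : ℕ → (A →L[ℂ] ℂ))
    (hk : ∀ n, 1 ≤ k n) (hmono : Monotone An)
    (hdense : Dense (⋃ n, (An n : Set A)))
    (hiso : ∀ n, Nonempty (An n ≃⋆ₐ[ℂ] Matrix (Fin (∏ j ∈ Finset.range n, k j))
      (Fin (∏ j ∈ Finset.range n, k j)) ℂ))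
    (hp : ∀ n, ∀ j < n, p n j ∈ An (n + 1) ∧ (∀ y ∈ An n, Commute (p n j) y) ∧
      IsSelfAdjoint (p n j) ∧ p n j * p n j = p n j ∧ p n j ≠ 0)
    (hporth : ∀ n, ∀ j < n, ∀ j' < n, j ≠ j' → p n j * p n j' = 0)
    (hprank1 : ∀ n, ∀ j < n, ∀ z ∈ An (n + 1), (∀ y ∈ An n, Commute z y) →
      ∃ c : ℂ, p n j * z * p n j = c • p n j)
    (hq : ∀ m, q m ∈ An m ∧ IsSelfAdjoint (q m) ∧ q m * q m = q m ∧ q m ≠ 0 ∧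
      ∀ z ∈ An m, ∃ c : ℂ, q m * z * q m = c • q m)
    (hφpure : ∀ m, IsPureState (φ m))
    (hφone : ∀ m, ∀ l, 1 ≤ l → φ m (sepProdElem q p m l) = 1) :
    (∀ j l, j ≠ l → ¬ StateUnitarilyEquiv (φ j) (φ l)) ∧
      ∀ j l, j ≠ l → ∀ n : ℕ, ∃ pr : A, (∀ y ∈ An n, Commute pr y) ∧
        IsSelfAdjoint pr ∧ pr * pr = pr ∧ φ j pr = 0 ∧ φ l pr = 1 :=
  separated_product_states_pairwise_inequivalent_general A An p q φ hmono hdense hp hporth hq hφpure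
    hφone

end
end

section
/- Let δ > 0 and let f, g : [0,1] → [0,1] be continuous functions with f(0) = g(0) = 0. Then there exists ε > 0 such that for every C*-algebra A, all positive contractions x, y ∈ A, and every contraction z ∈ A, the inequality ‖xzy‖ < ε implies ‖f(x) z g(y)‖ < δ. -/
/-!
Away from `0` we can factor `f t = t * h t` with `h t = f t / t`; cutting the denominator off at a
small `s > 0`, where `|f| ≤ η`, gives a continuous `h` with `|f t - t * h t| ≤ η` on `[0, 1]`,
`|t * h t| ≤ 1` and `|h| ≤ 1 / s`. Doing the same for `g` (with `k` and `s'`), `f(x) z g(y)` is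
within `2η` of `h(x) (x z y) k(y)`, whose norm is at most `‖x z y‖ / (s s')`.
-/

open Set

noncomputable def truncDivId (f : ℝ → ℝ) (s t : ℝ) : ℝ := f t / max t s

section truncDivId

variable {f : ℝ → ℝ} {s t : ℝ}

lemma continuous_truncDivId (hf : Continuous f) (hs : 0 < s) : Continuous (truncDivId f s) :=
  hf.div (continuous_id.max continuous_const) fun t => (hs.trans_le (le_max_right t s)).ne'

lemma abs_truncDivId_le (hs : 0 < s) (hft : |f t| ≤ 1) : |truncDivId f s t| ≤ s⁻¹ := by
  have hmax : s ≤ max t s := le_max_right t s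
  rw [truncDivId, abs_div, abs_of_pos (hs.trans_le hmax)]
  calc |f t| / max t s ≤ 1 / max t s := by gcongr
    _ ≤ 1 / s := by gcongr
    _ = s⁻¹ := one_div s

lemma abs_mul_truncDivId_le (hs : 0 < s) (ht : 0 ≤ t) : |t * truncDivId f s t| ≤ |f t| := by
  have hmax : 0 < max t s := hs.trans_le (le_max_right t s)
  rw [truncDivId, abs_mul, abs_div, abs_of_nonneg ht, abs_of_pos hmax, mul_div_left_comm]
  exact mul_le_of_le_one_right (abs_nonneg _) ((div_le_one hmax).2 (le_max_left t s))

lemma abs_sub_mul_truncDivId_le {η : ℝ} (hs : 0 < s) (hη : 0 ≤ η) (ht : 0 ≤ t)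
    (hft : t < s → |f t| ≤ η) : |f t - t * truncDivId f s t| ≤ η := by
  rcases lt_or_ge t s with hts | hst
  · rw [truncDivId, max_eq_right hts.le, mul_div_left_comm, ← mul_one_sub, abs_mul,
      abs_of_nonneg (sub_nonneg.2 ((div_le_one hs).2 hts.le))]
    exact (mul_le_of_le_one_right (abs_nonneg _) (sub_le_self _ (div_nonneg ht hs.le))).trans
      (hft hts)
  · rw [truncDivId, max_eq_left hst, mul_div_cancel₀ _ (hs.trans_le hst).ne', sub_self, abs_zero]
    exact hη

end truncDivId

lemma exists_pos_forall_Ico_abs_le {f : ℝ → ℝ} (hf : ContinuousAt f 0) (hf0 : f 0 = 0) {η : ℝ}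
    (hη : 0 < η) : ∃ s > 0, ∀ t ∈ Ico 0 s, |f t| ≤ η := by
  obtain ⟨s, hs, hfs⟩ := Metric.continuousAt_iff.1 hf η hη
  refine ⟨s, hs, fun t ht => ?_⟩
  have := hfs (x := t) (by rw [Real.dist_0_eq_abs, abs_of_nonneg ht.1]; exact ht.2)
  rw [hf0, Real.dist_0_eq_abs] at this
  exact this.le

lemma norm_mul_mul_le_add {R : Type*} [NormedRing R] (a z b a' b' : R) :
    ‖a * z * b‖ ≤ ‖a - a'‖ * ‖z‖ * ‖b‖ + ‖a'‖ * ‖z‖ * ‖b - b'‖ + ‖a' * z * b'‖ := by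
  have h : a * z * b = (a - a') * z * b + a' * z * (b - b') + a' * z * b' := by noncomm_ring
  rw [h]
  exact norm_add₃_le.trans (add_le_add_three (norm_mul₃_le ..) (norm_mul₃_le ..) le_rfl)

section CStarAlgebra

variable {A : Type*} [CStarAlgebra A]

lemma spectrum_star_mul_self_subset_Icc {w : A} (hw : ‖star w * w‖ ≤ 1) :
    spectrum ℝ (star w * w) ⊆ Icc 0 1 := by
  nontriviality A using spectrum.of_subsingleton
  exact fun t ht => ⟨spectrum_star_mul_self_nonneg t ht,
    (le_abs_self t).trans ((spectrum.norm_le_norm_of_mem ht).trans hw)⟩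

lemma exists_commute_norm_cfc_sub_mul_le {x : A} (hxsa : IsSelfAdjoint x)
    (hx : spectrum ℝ x ⊆ Icc 0 1) {f : ℝ → ℝ} (hf : Continuous f)
    (hf1 : ∀ t ∈ Icc 0 1, |f t| ≤ 1) {s η : ℝ} (hs : 0 < s) (hη : 0 ≤ η)
    (hfη : ∀ t ∈ Ico 0 s, |f t| ≤ η) :
    ∃ u : A, Commute x u ∧ ‖cfc f x - x * u‖ ≤ η ∧ ‖x * u‖ ≤ 1 ∧ ‖u‖ ≤ s⁻¹ := by
  have hcont := continuous_truncDivId hf hs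
  have hxu : x * cfc (truncDivId f s) x = cfc (fun t => t * truncDivId f s t) x := by
    rw [cfc_mul (fun t => t) _ x, cfc_id' ℝ x]
  refine ⟨cfc (truncDivId f s) x, ?_, ?_, ?_, ?_⟩
  · simpa only [cfc_id' ℝ x] using cfc_commute_cfc (fun t => t) (truncDivId f s) x
  · rw [hxu, ← cfc_sub f _ x]
    refine norm_cfc_le hη fun t ht => ?_
    exact abs_sub_mul_truncDivId_le hs hη (hx ht).1 fun hts => hfη t ⟨(hx ht).1, hts⟩
  · rw [hxu]
    exact norm_cfc_le zero_le_one fun t ht =>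
      (abs_mul_truncDivId_le hs (hx ht).1).trans (hf1 t (hx ht))
  · exact norm_cfc_le (inv_nonneg.2 hs.le) fun t ht => abs_truncDivId_le hs (hf1 t (hx ht))

lemma norm_cfc_mul_mul_cfc_le {x y z : A} (hxsa : IsSelfAdjoint x) (hysa : IsSelfAdjoint y)
    (hx : spectrum ℝ x ⊆ Icc 0 1) (hy : spectrum ℝ y ⊆ Icc 0 1) (hz : ‖z‖ ≤ 1) {f g : ℝ → ℝ}
    (hf : Continuous f) (hg : Continuous g) (hf1 : ∀ t ∈ Icc 0 1, |f t| ≤ 1)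
    (hg1 : ∀ t ∈ Icc 0 1, |g t| ≤ 1)
    {s s' η : ℝ} (hs : 0 < s) (hs' : 0 < s') (hη : 0 ≤ η) (hfη : ∀ t ∈ Ico 0 s, |f t| ≤ η)
    (hgη : ∀ t ∈ Ico 0 s', |g t| ≤ η) :
    ‖cfc f x * z * cfc g y‖ ≤ 2 * η + ‖x * z * y‖ / (s * s') := by
  obtain ⟨u, hxu, hfu, hxu1, hu⟩ := exists_commute_norm_cfc_sub_mul_le hxsa hx hf hf1 hs hη hfη
  obtain ⟨v, -, hgv, -, hv⟩ := exists_commute_norm_cfc_sub_mul_le hysa hy hg hg1 hs' hη hgη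
  have hgy : ‖cfc g y‖ ≤ 1 := norm_cfc_le zero_le_one fun t ht => hg1 t (hy ht)
  have hcore : x * u * z * (y * v) = u * (x * z * y) * v := by rw [hxu.eq]; noncomm_ring
  calc ‖cfc f x * z * cfc g y‖
      ≤ ‖cfc f x - x * u‖ * ‖z‖ * ‖cfc g y‖ + ‖x * u‖ * ‖z‖ * ‖cfc g y - y * v‖
        + ‖x * u * z * (y * v)‖ := norm_mul_mul_le_add ..
    _ ≤ η * 1 * 1 + 1 * 1 * η + s⁻¹ * ‖x * z * y‖ * s'⁻¹ := by
        rw [hcore]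
        gcongr
        exact norm_mul₃_le.trans (by gcongr)
    _ = 2 * η + ‖x * z * y‖ / (s * s') := by field_simp; ring

end CStarAlgebra

/-- **Lemma.** Let `δ > 0` and let `f, g : [0,1] → [0,1]` be continuous with
`f 0 = g 0 = 0` (encoded as continuous real functions mapping `[0,1]` to `[0,1]`,
applied by continuous functional calculus).  There is an `ε > 0` such that for
every C*-algebra `A`, all positive contractions `x, y ∈ A` and every contraction
`z ∈ A`, `‖x z y‖ < ε` implies `‖f(x) z g(y)‖ < δ`. -/
theorem uniform_functional_calculus_smallness
    (δ : ℝ) (hδ : 0 < δ) (f g : ℝ → ℝ)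
    (hfc : Continuous f) (hgc : Continuous g)
    (hfmap : Set.MapsTo f (Set.Icc (0:ℝ) 1) (Set.Icc (0:ℝ) 1))
    (hgmap : Set.MapsTo g (Set.Icc (0:ℝ) 1) (Set.Icc (0:ℝ) 1))
    (hf0 : f 0 = 0) (hg0 : g 0 = 0) :
    ∃ ε > (0:ℝ), ∀ (A : Type) (_ : CStarAlgebra A) (x y z : A),
      (∃ w : A, x = star w * w) → ‖x‖ ≤ 1 →
      (∃ w : A, y = star w * w) → ‖y‖ ≤ 1 →
      ‖z‖ ≤ 1 → ‖x * z * y‖ < ε →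
      ‖cfc f x * z * cfc g y‖ < δ := by
  have habs : ∀ {h : ℝ → ℝ}, MapsTo h (Icc 0 1) (Icc 0 1) → ∀ t ∈ Icc (0 : ℝ) 1, |h t| ≤ 1 :=
    fun hh t ht => (abs_of_nonneg (hh ht).1).trans_le (hh ht).2
  obtain ⟨s, hs, hfs⟩ := exists_pos_forall_Ico_abs_le hfc.continuousAt hf0 (div_pos hδ four_pos)
  obtain ⟨s', hs', hgs⟩ := exists_pos_forall_Ico_abs_le hgc.continuousAt hg0 (div_pos hδ four_pos)
  refine ⟨δ * (s * s') / 2, by positivity, ?_⟩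
  rintro A _ x y z ⟨w, rfl⟩ hx ⟨w', rfl⟩ hy hz hxzy
  calc ‖cfc f (star w * w) * z * cfc g (star w' * w')‖
      ≤ 2 * (δ / 4) + ‖star w * w * z * (star w' * w')‖ / (s * s') :=
        norm_cfc_mul_mul_cfc_le (.star_mul_self w) (.star_mul_self w')
          (spectrum_star_mul_self_subset_Icc hx) (spectrum_star_mul_self_subset_Icc hy) hz
          hfc hgc (habs hfmap) (habs hgmap) hs hs' (by positivity) hfs hgs
    _ < 2 * (δ / 4) + δ / 2 := by
        have hss' : 0 < s * s' := mul_pos hs hs'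
        gcongr ?_ + ?_
        rwa [div_lt_iff₀ hss', div_mul_eq_mul_div]
    _ = δ := by ring
end
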